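/- Let H be a Hopf algebroid with a non-degenerate right integral i that is invariant under the antipode (so i is a two-sided integral), and let Q = (H_H, ∗, η) be the associated Frobenius algebra in M_H. Then the internal U-Q bimodule X = (H_H, l_H, ∗) in the bimodule bicategory BIM(M_H) satisfies the left D2 condition, with D2 quasi-basis Λ(S(i₍₁₎)) ⊗ Λ(i₍₂₎), where Λ(h) is left multiplication by h on H. -/

import Mathlib

universe u

/-- A Böhm–Szlachányi Hopf algebroid with total ring `A`, left bialgebroid structure over `L`
and right bialgebroid structure over `R`.  The coproducts `γ_L(a) = ∑ᵢ c1 a i ⊗ c2 a i`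
(`i < nL a`) and `γ_R(a) = ∑ᵢ d1 a i ⊗ d2 a i` (`i < nR a`) are recorded by chosen
representatives; all identities involving them are stated by evaluation against arbitrary
balanced biadditive maps, which is exactly equality in the corresponding tensor product
over the (non-commutative) base ring.  Multiplication in `A` is written in the same order
as in the paper. -/
structure HopfAlgebroidData (A L R : Type u) [Ring A] [Ring L] [Ring R] where
  sL : L → A
  tL : L → A
  sR : R → A
  tR : R → A
  sL_one : sL 1 = 1
  sL_add : ∀ x y, sL (x + y) = sL x + sL y
  sL_mul : ∀ x y, sL (x * y) = sL x * sL y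
  tL_one : tL 1 = 1
  tL_add : ∀ x y, tL (x + y) = tL x + tL y
  tL_mul : ∀ x y, tL (x * y) = tL y * tL x
  sR_one : sR 1 = 1
  sR_add : ∀ x y, sR (x + y) = sR x + sR y
  sR_mul : ∀ x y, sR (x * y) = sR x * sR y
  tR_one : tR 1 = 1
  tR_add : ∀ x y, tR (x + y) = tR x + tR y
  tR_mul : ∀ x y, tR (x * y) = tR y * tR x
  commL : ∀ l l', sL l * tL l' = tL l' * sL l
  commR : ∀ r r', sR r * tR r' = tR r' * sR r
  /-- number of terms of `γ_L a` -/
  nL : A → ℕ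
  c1 : A → ℕ → A
  c2 : A → ℕ → A
  πL : A → L
  /-- number of terms of `γ_R a` -/
  nR : A → ℕ
  d1 : A → ℕ → A
  d2 : A → ℕ → A
  πR : A → R
  S : A → A
  Sinv : A → A
  -- `γ_L` is additive, a bimodule map `_L A _L → A_L ⊗_L {}_L A`
  -- (with `l·a·l' = sL l * tL l' * a`, balanced maps satisfy `f (tL l * u) v = f u (sL l * v)`)
  comulL_add : ∀ {M : Type u} [AddCommGroup M] (f : A → A → M),
    (∀ u u' v, f (u + u') v = f u v + f u' v) →
    (∀ u v v', f u (v + v') = f u v + f u v') →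
    (∀ l u v, f (tL l * u) v = f u (sL l * v)) →
    ∀ a b, (∑ i ∈ Finset.range (nL (a + b)), f (c1 (a + b) i) (c2 (a + b) i)) =
      (∑ i ∈ Finset.range (nL a), f (c1 a i) (c2 a i)) +
      (∑ i ∈ Finset.range (nL b), f (c1 b i) (c2 b i))
  comulL_bimod : ∀ {M : Type u} [AddCommGroup M] (f : A → A → M),
    (∀ u u' v, f (u + u') v = f u v + f u' v) →
    (∀ u v v', f u (v + v') = f u v + f u v') →
    (∀ l u v, f (tL l * u) v = f u (sL l * v)) →
    ∀ (l l' : L) a,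
      (∑ i ∈ Finset.range (nL (sL l * tL l' * a)),
        f (c1 (sL l * tL l' * a) i) (c2 (sL l * tL l' * a) i)) =
      (∑ i ∈ Finset.range (nL a), f (sL l * c1 a i) (tL l' * c2 a i))
  comulL_coassoc : ∀ {M : Type u} [AddCommGroup M] (g : A → A → A → M),
    (∀ u u' v w, g (u + u') v w = g u v w + g u' v w) →
    (∀ u v v' w, g u (v + v') w = g u v w + g u v' w) →
    (∀ u v w w', g u v (w + w') = g u v w + g u v w') →
    (∀ l u v w, g (tL l * u) v w = g u (sL l * v) w) →
    (∀ l u v w, g u (tL l * v) w = g u v (sL l * w)) →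
    ∀ a, (∑ i ∈ Finset.range (nL a), ∑ j ∈ Finset.range (nL (c1 a i)),
        g (c1 (c1 a i) j) (c2 (c1 a i) j) (c2 a i)) =
      (∑ i ∈ Finset.range (nL a), ∑ j ∈ Finset.range (nL (c2 a i)),
        g (c1 a i) (c1 (c2 a i) j) (c2 (c2 a i) j))
  comulL_takeuchi : ∀ {M : Type u} [AddCommGroup M] (f : A → A → M),
    (∀ u u' v, f (u + u') v = f u v + f u' v) →
    (∀ u v v', f u (v + v') = f u v + f u v') →
    (∀ l u v, f (tL l * u) v = f u (sL l * v)) →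
    ∀ (l : L) a, (∑ i ∈ Finset.range (nL a), f (c1 a i * tL l) (c2 a i)) =
      (∑ i ∈ Finset.range (nL a), f (c1 a i) (c2 a i * sL l))
  comulL_one : ∀ {M : Type u} [AddCommGroup M] (f : A → A → M),
    (∀ u u' v, f (u + u') v = f u v + f u' v) →
    (∀ u v v', f u (v + v') = f u v + f u v') →
    (∀ l u v, f (tL l * u) v = f u (sL l * v)) →
    (∑ i ∈ Finset.range (nL 1), f (c1 1 i) (c2 1 i)) = f 1 1
  comulL_mul : ∀ {M : Type u} [AddCommGroup M] (f : A → A → M),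
    (∀ u u' v, f (u + u') v = f u v + f u' v) →
    (∀ u v v', f u (v + v') = f u v + f u v') →
    (∀ l u v, f (tL l * u) v = f u (sL l * v)) →
    ∀ a b, (∑ i ∈ Finset.range (nL (a * b)), f (c1 (a * b) i) (c2 (a * b) i)) =
      (∑ i ∈ Finset.range (nL a), ∑ j ∈ Finset.range (nL b),
        f (c1 a i * c1 b j) (c2 a i * c2 b j))
  πL_one : πL 1 = 1
  πL_add : ∀ a b, πL (a + b) = πL a + πL b
  counitL_left : ∀ a, (∑ i ∈ Finset.range (nL a), sL (πL (c1 a i)) * c2 a i) = a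
  counitL_right : ∀ a, (∑ i ∈ Finset.range (nL a), tL (πL (c2 a i)) * c1 a i) = a
  πL_runit : ∀ a b, πL (a * sL (πL b)) = πL (a * b)
  πL_runit' : ∀ a b, πL (a * tL (πL b)) = πL (a * b)
  -- right bialgebroid data (`r·a·r' = a * sR r' * tR r`, balanced maps satisfy
  -- `f (u * sR r) v = f u (v * tR r)`)
  comulR_add : ∀ {M : Type u} [AddCommGroup M] (f : A → A → M),
    (∀ u u' v, f (u + u') v = f u v + f u' v) →
    (∀ u v v', f u (v + v') = f u v + f u v') →
    (∀ r u v, f (u * sR r) v = f u (v * tR r)) →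
    ∀ a b, (∑ i ∈ Finset.range (nR (a + b)), f (d1 (a + b) i) (d2 (a + b) i)) =
      (∑ i ∈ Finset.range (nR a), f (d1 a i) (d2 a i)) +
      (∑ i ∈ Finset.range (nR b), f (d1 b i) (d2 b i))
  comulR_bimod : ∀ {M : Type u} [AddCommGroup M] (f : A → A → M),
    (∀ u u' v, f (u + u') v = f u v + f u' v) →
    (∀ u v v', f u (v + v') = f u v + f u v') →
    (∀ r u v, f (u * sR r) v = f u (v * tR r)) →
    ∀ (r r' : R) a,
      (∑ i ∈ Finset.range (nR (a * sR r' * tR r)),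
        f (d1 (a * sR r' * tR r) i) (d2 (a * sR r' * tR r) i)) =
      (∑ i ∈ Finset.range (nR a), f (d1 a i * tR r) (d2 a i * sR r'))
  comulR_coassoc : ∀ {M : Type u} [AddCommGroup M] (g : A → A → A → M),
    (∀ u u' v w, g (u + u') v w = g u v w + g u' v w) →
    (∀ u v v' w, g u (v + v') w = g u v w + g u v' w) →
    (∀ u v w w', g u v (w + w') = g u v w + g u v w') →
    (∀ r u v w, g (u * sR r) v w = g u (v * tR r) w) →
    (∀ r u v w, g u (v * sR r) w = g u v (w * tR r)) →
    ∀ a, (∑ i ∈ Finset.range (nR a), ∑ j ∈ Finset.range (nR (d1 a i)),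
        g (d1 (d1 a i) j) (d2 (d1 a i) j) (d2 a i)) =
      (∑ i ∈ Finset.range (nR a), ∑ j ∈ Finset.range (nR (d2 a i)),
        g (d1 a i) (d1 (d2 a i) j) (d2 (d2 a i) j))
  comulR_takeuchi : ∀ {M : Type u} [AddCommGroup M] (f : A → A → M),
    (∀ u u' v, f (u + u') v = f u v + f u' v) →
    (∀ u v v', f u (v + v') = f u v + f u v') →
    (∀ r u v, f (u * sR r) v = f u (v * tR r)) →
    ∀ (r : R) a, (∑ i ∈ Finset.range (nR a), f (sR r * d1 a i) (d2 a i)) =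
      (∑ i ∈ Finset.range (nR a), f (d1 a i) (tR r * d2 a i))
  comulR_one : ∀ {M : Type u} [AddCommGroup M] (f : A → A → M),
    (∀ u u' v, f (u + u') v = f u v + f u' v) →
    (∀ u v v', f u (v + v') = f u v + f u v') →
    (∀ r u v, f (u * sR r) v = f u (v * tR r)) →
    (∑ i ∈ Finset.range (nR 1), f (d1 1 i) (d2 1 i)) = f 1 1
  comulR_mul : ∀ {M : Type u} [AddCommGroup M] (f : A → A → M),
    (∀ u u' v, f (u + u') v = f u v + f u' v) →
    (∀ u v v', f u (v + v') = f u v + f u v') →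
    (∀ r u v, f (u * sR r) v = f u (v * tR r)) →
    ∀ a b, (∑ i ∈ Finset.range (nR (a * b)), f (d1 (a * b) i) (d2 (a * b) i)) =
      (∑ i ∈ Finset.range (nR a), ∑ j ∈ Finset.range (nR b),
        f (d1 a i * d1 b j) (d2 a i * d2 b j))
  πR_one : πR 1 = 1
  πR_add : ∀ a b, πR (a + b) = πR a + πR b
  counitR_left : ∀ a, (∑ i ∈ Finset.range (nR a), d1 a i * sR (πR (d2 a i))) = a
  counitR_right : ∀ a, (∑ i ∈ Finset.range (nR a), d2 a i * tR (πR (d1 a i))) = a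
  πR_lunit : ∀ a b, πR (sR (πR a) * b) = πR (a * b)
  πR_lunit' : ∀ a b, πR (tR (πR a) * b) = πR (a * b)
  -- Hopf algebroid axioms
  range_sL_tR : Set.range sL = Set.range tR
  range_tL_sR : Set.range tL = Set.range sR
  mixed₁ : ∀ {M : Type u} [AddCommGroup M] (g : A → A → A → M),
    (∀ u u' v w, g (u + u') v w = g u v w + g u' v w) →
    (∀ u v v' w, g u (v + v') w = g u v w + g u v' w) →
    (∀ u v w w', g u v (w + w') = g u v w + g u v w') →
    (∀ l u v w, g (tL l * u) v w = g u (sL l * v) w) →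
    (∀ r u v w, g u (v * sR r) w = g u v (w * tR r)) →
    ∀ a, (∑ i ∈ Finset.range (nR a), ∑ j ∈ Finset.range (nL (d1 a i)),
        g (c1 (d1 a i) j) (c2 (d1 a i) j) (d2 a i)) =
      (∑ i ∈ Finset.range (nL a), ∑ j ∈ Finset.range (nR (c2 a i)),
        g (c1 a i) (d1 (c2 a i) j) (d2 (c2 a i) j))
  mixed₂ : ∀ {M : Type u} [AddCommGroup M] (g : A → A → A → M),
    (∀ u u' v w, g (u + u') v w = g u v w + g u' v w) →
    (∀ u v v' w, g u (v + v') w = g u v w + g u v' w) →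
    (∀ u v w w', g u v (w + w') = g u v w + g u v w') →
    (∀ r u v w, g (u * sR r) v w = g u (v * tR r) w) →
    (∀ l u v w, g u (tL l * v) w = g u v (sL l * w)) →
    ∀ a, (∑ i ∈ Finset.range (nL a), ∑ j ∈ Finset.range (nR (c1 a i)),
        g (d1 (c1 a i) j) (d2 (c1 a i) j) (c2 a i)) =
      (∑ i ∈ Finset.range (nR a), ∑ j ∈ Finset.range (nL (d2 a i)),
        g (d1 a i) (c1 (d2 a i) j) (c2 (d2 a i) j))
  S_add : ∀ a b, S (a + b) = S a + S b
  S_leftinv : ∀ a, Sinv (S a) = a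
  S_rightinv : ∀ a, S (Sinv a) = a
  S_twistL : ∀ l l' a, S (tL l * a * tL l') = sL l' * S a * sL l
  S_twistR : ∀ r r' a, S (tR r' * a * tR r) = sR r * S a * sR r'
  antipode_L : ∀ a, (∑ i ∈ Finset.range (nL a), S (c1 a i) * c2 a i) = sR (πR a)
  antipode_R : ∀ a, (∑ i ∈ Finset.range (nR a), d1 a i * S (d2 a i)) = sL (πL a)


namespace HopfAlgebroidData

variable {A L R : Type u} [Ring A] [Ring L] [Ring R] (H : HopfAlgebroidData A L R)

/-- The left `L`-dual `{}_*H` of `{}_L H` (maps `{}_L A → {}_L L`). -/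
def LStarDual : Type u :=
  {φ : A → L // (∀ x y, φ (x + y) = φ x + φ y) ∧ ∀ l x, φ (H.sL l * x) = l * φ x}

/-- The right `L`-dual `H_*` of `H_L` (maps `A_L → L_L`). -/
def StarLDual : Type u :=
  {φ : A → L // (∀ x y, φ (x + y) = φ x + φ y) ∧ ∀ l x, φ (H.tL l * x) = φ x * l}

/-- The map `{}_L i : {}_*H → H`, `φ ↦ i ⇁ φ = t_L(φ(i₍₂₎)) i₍₁₎`. -/
def intMapL (i : A) : H.LStarDual → A :=
  fun φ => ∑ k ∈ Finset.range (H.nL i), H.tL (φ.1 (H.c2 i k)) * H.c1 i k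

/-- The map `i_L : H_* → H`, `φ ↦ i ↼ φ = s_L(φ(i₍₁₎)) i₍₂₎`. -/
def intMapR (i : A) : H.StarLDual → A :=
  fun φ => ∑ k ∈ Finset.range (H.nL i), H.sL (φ.1 (H.c1 i k)) * H.c2 i k

/-- The convolution product `h ∗ k = t_L(ρ(h₍₂₎ S(k))) h₍₁₎`, where `ρ = {}_L i⁻¹(1)`. -/
def hconv (ρ : A → L) (h k : A) : A :=
  ∑ j ∈ Finset.range (H.nL h), H.tL (ρ (H.c2 h j * H.S k)) * H.c1 h j

/-- The unit map `η : R → H`, `r ↦ i s_R(r)` of the convolution algebra. -/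
def heta (i : A) (r : R) : A := i * H.sR r

section Tools

variable {M : Type u} [AddCommGroup M]

/-- Biadditive `L`-balanced maps. -/
def BalL (f : A → A → M) : Prop :=
  (∀ u u' v, f (u + u') v = f u v + f u' v) ∧
  (∀ u v v', f u (v + v') = f u v + f u v') ∧
  (∀ l u v, f (H.tL l * u) v = f u (H.sL l * v))

/-- Biadditive `R`-balanced maps. -/
def BalR (f : A → A → M) : Prop :=
  (∀ u u' v, f (u + u') v = f u v + f u' v) ∧
  (∀ u v v', f u (v + v') = f u v + f u v') ∧
  (∀ r u v, f (u * H.sR r) v = f u (v * H.tR r))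

/-- Evaluation of `γ_L a` against a balanced map. -/
def EL (a : A) (f : A → A → M) : M :=
  ∑ j ∈ Finset.range (H.nL a), f (H.c1 a j) (H.c2 a j)

/-- Evaluation of `γ_R a` against a balanced map. -/
def ER (a : A) (f : A → A → M) : M :=
  ∑ t ∈ Finset.range (H.nR a), f (H.d1 a t) (H.d2 a t)

lemma sum_apply₁ (f : A → A → M) (h1 : ∀ u u' v, f (u + u') v = f u v + f u' v)
    {ι : Type*} (s : Finset ι) (g : ι → A) (v : A) :
    f (∑ m ∈ s, g m) v = ∑ m ∈ s, f (g m) v :=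
  map_sum (AddMonoidHom.mk' (fun u => f u v) fun a b => h1 a b v) g s

lemma sum_apply₂ (f : A → A → M) (h2 : ∀ u v v', f u (v + v') = f u v + f u v')
    {ι : Type*} (s : Finset ι) (u : A) (g : ι → A) :
    f u (∑ m ∈ s, g m) = ∑ m ∈ s, f u (g m) :=
  map_sum (AddMonoidHom.mk' (fun v => f u v) fun a b => h2 u a b) g s

lemma S_sum {ι : Type*} (s : Finset ι) (g : ι → A) :
    H.S (∑ m ∈ s, g m) = ∑ m ∈ s, H.S (g m) :=
  map_sum (AddMonoidHom.mk' H.S H.S_add) g s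

lemma EL_add (f : A → A → M) (hf : H.BalL f) (a b : A) :
    H.EL (a + b) f = H.EL a f + H.EL b f :=
  H.comulL_add f hf.1 hf.2.1 hf.2.2 a b

lemma EL_zero (f : A → A → M) (hf : H.BalL f) : H.EL (0 : A) f = 0 := by
  have h := H.EL_add f hf 0 0
  rw [add_zero] at h
  exact (left_eq_add.mp h)

lemma EL_sum (f : A → A → M) (hf : H.BalL f) {ι : Type*} (s : Finset ι) (g : ι → A) :
    H.EL (∑ m ∈ s, g m) f = ∑ m ∈ s, H.EL (g m) f := by
  classical
  induction s using Finset.induction with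
  | empty => simpa using H.EL_zero f hf
  | insert _ _ hx ih => rw [Finset.sum_insert hx, Finset.sum_insert hx, H.EL_add f hf, ih]

lemma EL_one (f : A → A → M) (hf : H.BalL f) : H.EL (1 : A) f = f 1 1 :=
  H.comulL_one f hf.1 hf.2.1 hf.2.2

lemma EL_mul (f : A → A → M) (hf : H.BalL f) (a b : A) :
    H.EL (a * b) f = ∑ j ∈ Finset.range (H.nL a), ∑ m ∈ Finset.range (H.nL b),
      f (H.c1 a j * H.c1 b m) (H.c2 a j * H.c2 b m) :=
  H.comulL_mul f hf.1 hf.2.1 hf.2.2 a b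

lemma EL_takeuchi (f : A → A → M) (hf : H.BalL f) (l : L) (a : A) :
    (∑ j ∈ Finset.range (H.nL a), f (H.c1 a j * H.tL l) (H.c2 a j)) =
    ∑ j ∈ Finset.range (H.nL a), f (H.c1 a j) (H.c2 a j * H.sL l) :=
  H.comulL_takeuchi f hf.1 hf.2.1 hf.2.2 l a

lemma EL_sL (f : A → A → M) (hf : H.BalL f) (l : L) :
    H.EL (H.sL l) f = f (H.sL l) 1 := by
  have h := H.comulL_bimod f hf.1 hf.2.1 hf.2.2 l 1 1
  simp only [H.tL_one, mul_one, one_mul] at h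
  have h2 := H.comulL_one (fun u v => f (H.sL l * u) v)
    (fun u u' v => by rw [mul_add, hf.1])
    (fun u v v' => by rw [hf.2.1])
    (fun m u v => by
      rw [show H.sL l * (H.tL m * u) = H.tL m * (H.sL l * u) by
        rw [← mul_assoc, H.commL, mul_assoc], hf.2.2])
  simp only [EL]
  rw [h, h2, mul_one]

lemma EL_tL (f : A → A → M) (hf : H.BalL f) (l : L) :
    H.EL (H.tL l) f = f 1 (H.tL l) := by
  have h := H.comulL_bimod f hf.1 hf.2.1 hf.2.2 1 l 1
  simp only [H.sL_one, one_mul, mul_one] at h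
  have h2 := H.comulL_one (fun u v => f u (H.tL l * v))
    (fun u u' v => by rw [hf.1])
    (fun u v v' => by rw [mul_add, hf.2.1])
    (fun m u v => by
      rw [hf.2.2, show H.sL m * (H.tL l * v) = H.tL l * (H.sL m * v) by
        rw [← mul_assoc, H.commL, mul_assoc]])
  simp only [EL]
  rw [h, h2, mul_one]

lemma EL_mul_tL (f : A → A → M) (hf : H.BalL f) (a : A) (l : L) :
    H.EL (a * H.tL l) f =
      ∑ j ∈ Finset.range (H.nL a), f (H.c1 a j) (H.c2 a j * H.tL l) := by
  rw [H.EL_mul f hf a (H.tL l), Finset.sum_comm]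
  have hF : H.BalL (fun u v => ∑ j ∈ Finset.range (H.nL a),
      f (H.c1 a j * u) (H.c2 a j * v)) := by
    refine ⟨fun u u' v => ?_, fun u v v' => ?_, fun m u v => ?_⟩
    · simp only [mul_add, hf.1, Finset.sum_add_distrib]
    · simp only [mul_add, hf.2.1, Finset.sum_add_distrib]
    · have ht := H.comulL_takeuchi (fun x y => f (x * u) (y * v))
        (fun x x' y => by rw [add_mul, hf.1])
        (fun x y y' => by rw [add_mul, hf.2.1])
        (fun n x y => by rw [mul_assoc, hf.2.2, mul_assoc])
        m a
      dsimp only at ht ⊢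
      simp only [← mul_assoc] at ht ⊢
      exact ht
  have := H.EL_tL _ hF l
  simp only [EL] at this ⊢
  rw [this]
  simp only [mul_one]

lemma ER_add (f : A → A → M) (hf : H.BalR f) (a b : A) :
    H.ER (a + b) f = H.ER a f + H.ER b f :=
  H.comulR_add f hf.1 hf.2.1 hf.2.2 a b

lemma ER_zero (f : A → A → M) (hf : H.BalR f) : H.ER (0 : A) f = 0 := by
  have h := H.ER_add f hf 0 0
  rw [add_zero] at h
  exact (left_eq_add.mp h)

lemma ER_sum (f : A → A → M) (hf : H.BalR f) {ι : Type*} (s : Finset ι) (g : ι → A) :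
    H.ER (∑ m ∈ s, g m) f = ∑ m ∈ s, H.ER (g m) f := by
  classical
  induction s using Finset.induction with
  | empty => simpa using H.ER_zero f hf
  | insert _ _ hx ih => rw [Finset.sum_insert hx, Finset.sum_insert hx, H.ER_add f hf, ih]

lemma ER_one (f : A → A → M) (hf : H.BalR f) : H.ER (1 : A) f = f 1 1 :=
  H.comulR_one f hf.1 hf.2.1 hf.2.2

lemma ER_mul (f : A → A → M) (hf : H.BalR f) (a b : A) :
    H.ER (a * b) f = ∑ s ∈ Finset.range (H.nR a), ∑ t ∈ Finset.range (H.nR b),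
      f (H.d1 a s * H.d1 b t) (H.d2 a s * H.d2 b t) :=
  H.comulR_mul f hf.1 hf.2.1 hf.2.2 a b

lemma ER_takeuchi (f : A → A → M) (hf : H.BalR f) (r : R) (a : A) :
    (∑ t ∈ Finset.range (H.nR a), f (H.sR r * H.d1 a t) (H.d2 a t)) =
    ∑ t ∈ Finset.range (H.nR a), f (H.d1 a t) (H.tR r * H.d2 a t) :=
  H.comulR_takeuchi f hf.1 hf.2.1 hf.2.2 r a

lemma ER_sR (f : A → A → M) (hf : H.BalR f) (r : R) :
    H.ER (H.sR r) f = f 1 (H.sR r) := by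
  have h := H.comulR_bimod f hf.1 hf.2.1 hf.2.2 1 r 1
  simp only [H.tR_one, mul_one, one_mul] at h
  have h2 := H.comulR_one (fun u v => f u (v * H.sR r))
    (fun u u' v => by rw [hf.1])
    (fun u v v' => by rw [add_mul, hf.2.1])
    (fun x u v => by
      rw [hf.2.2, show v * H.tR x * H.sR r = v * H.sR r * H.tR x by
        rw [mul_assoc, ← H.commR, ← mul_assoc]])
  simp only [ER]
  rw [h, h2, one_mul]

lemma ER_tR (f : A → A → M) (hf : H.BalR f) (r : R) :
    H.ER (H.tR r) f = f (H.tR r) 1 := by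
  have h := H.comulR_bimod f hf.1 hf.2.1 hf.2.2 r 1 1
  simp only [H.sR_one, mul_one, one_mul] at h
  have h2 := H.comulR_one (fun u v => f (u * H.tR r) v)
    (fun u u' v => by rw [add_mul, hf.1])
    (fun u v v' => by rw [hf.2.1])
    (fun x u v => by
      rw [show u * H.sR x * H.tR r = u * H.tR r * H.sR x by
        rw [mul_assoc, H.commR, ← mul_assoc], hf.2.2])
  simp only [ER]
  rw [h, h2, one_mul]

lemma ER_sR_mul (f : A → A → M) (hf : H.BalR f) (r : R) (x : A) :
    H.ER (H.sR r * x) f =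
      ∑ t ∈ Finset.range (H.nR x), f (H.d1 x t) (H.sR r * H.d2 x t) := by
  rw [H.ER_mul f hf (H.sR r) x]
  have hF : H.BalR (fun u v => ∑ t ∈ Finset.range (H.nR x),
      f (u * H.d1 x t) (v * H.d2 x t)) := by
    refine ⟨fun u u' v => ?_, fun u v v' => ?_, fun r' u v => ?_⟩
    · simp only [add_mul, hf.1, Finset.sum_add_distrib]
    · simp only [add_mul, hf.2.1, Finset.sum_add_distrib]
    · have ht := H.comulR_takeuchi (fun X Y => f (u * X) (v * Y))
        (fun X X' Y => by rw [mul_add, hf.1])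
        (fun X Y Y' => by rw [mul_add, hf.2.1])
        (fun ρ X Y => by rw [← mul_assoc, hf.2.2, mul_assoc])
        r' x
      dsimp only at ht ⊢
      simp only [← mul_assoc] at ht ⊢
      exact ht
  have := H.ER_sR _ hF r
  simp only [ER] at this ⊢
  rw [this]
  simp only [one_mul]

lemma ER_tR_mul (f : A → A → M) (hf : H.BalR f) (r : R) (x : A) :
    H.ER (H.tR r * x) f =
      ∑ t ∈ Finset.range (H.nR x), f (H.tR r * H.d1 x t) (H.d2 x t) := by
  rw [H.ER_mul f hf (H.tR r) x]
  have hF : H.BalR (fun u v => ∑ t ∈ Finset.range (H.nR x),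
      f (u * H.d1 x t) (v * H.d2 x t)) := by
    refine ⟨fun u u' v => ?_, fun u v v' => ?_, fun r' u v => ?_⟩
    · simp only [add_mul, hf.1, Finset.sum_add_distrib]
    · simp only [add_mul, hf.2.1, Finset.sum_add_distrib]
    · have ht := H.comulR_takeuchi (fun X Y => f (u * X) (v * Y))
        (fun X X' Y => by rw [mul_add, hf.1])
        (fun X Y Y' => by rw [mul_add, hf.2.1])
        (fun ρ X Y => by rw [← mul_assoc, hf.2.2, mul_assoc])
        r' x
      dsimp only at ht ⊢
      simp only [← mul_assoc] at ht ⊢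
      exact ht
  have := H.ER_tR _ hF r
  simp only [ER] at this ⊢
  rw [this]
  simp only [one_mul]

lemma ER_tL_mul (f : A → A → M) (hf : H.BalR f) (l : L) (x : A) :
    H.ER (H.tL l * x) f =
      ∑ t ∈ Finset.range (H.nR x), f (H.d1 x t) (H.tL l * H.d2 x t) := by
  obtain ⟨r, hr⟩ : H.tL l ∈ Set.range H.sR := H.range_tL_sR ▸ Set.mem_range_self l
  rw [← hr]
  exact H.ER_sR_mul f hf r x

lemma ER_sL_mul (f : A → A → M) (hf : H.BalR f) (l : L) (x : A) :
    H.ER (H.sL l * x) f =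
      ∑ t ∈ Finset.range (H.nR x), f (H.sL l * H.d1 x t) (H.d2 x t) := by
  obtain ⟨r, hr⟩ : H.sL l ∈ Set.range H.tR := H.range_sL_tR ▸ Set.mem_range_self l
  rw [← hr]
  exact H.ER_tR_mul f hf r x

lemma S_mul_tL (a : A) (l : L) : H.S (a * H.tL l) = H.sL l * H.S a := by
  have h := H.S_twistL 1 l a
  simpa only [H.tL_one, H.sL_one, one_mul, mul_one] using h

lemma S_tL_mul (l : L) (a : A) : H.S (H.tL l * a) = H.S a * H.sL l := by
  have h := H.S_twistL l 1 a
  simpa only [H.tL_one, H.sL_one, one_mul, mul_one] using h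

lemma S_mul_tR (a : A) (r : R) : H.S (a * H.tR r) = H.sR r * H.S a := by
  have h := H.S_twistR r 1 a
  simpa only [H.tR_one, H.sR_one, one_mul, mul_one] using h

lemma S_one : H.S 1 = 1 := by
  have h := H.antipode_R 1
  rw [H.πL_one, H.sL_one] at h
  have h2 := H.comulR_one (fun u v => u * H.S v)
    (fun u u' v => by rw [add_mul])
    (fun u v v' => by rw [H.S_add, mul_add])
    (fun r u v => by rw [H.S_mul_tR, ← mul_assoc])
  rw [h, one_mul] at h2
  exact h2.symm

lemma S_tR (r : R) : H.S (H.tR r) = H.sR r := by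
  have h := H.S_mul_tR 1 r
  rw [one_mul, H.S_one, mul_one] at h
  exact h

lemma S_inj : Function.Injective H.S := fun a b hab => by
  rw [← H.S_leftinv a, hab, H.S_leftinv]

lemma Sinv_add (x y : A) : H.Sinv (x + y) = H.Sinv x + H.Sinv y := by
  apply H.S_inj
  rw [H.S_rightinv, H.S_add, H.S_rightinv, H.S_rightinv]

lemma Sinv_sL_mul (l : L) (b : A) : H.Sinv (H.sL l * b) = H.Sinv b * H.tL l := by
  apply H.S_inj
  rw [H.S_rightinv, H.S_mul_tL, H.S_rightinv]

lemma Sinv_sR (r : R) : H.Sinv (H.sR r) = H.tR r := by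
  apply H.S_inj
  rw [H.S_rightinv, H.S_tR]

end Tools

section Integral

/-- Key identity for a right integral: `i₍₁₎ a ⊗ i₍₂₎ = i₍₁₎ ⊗ i₍₂₎ S(a)` in `H ⊗_L H`. -/
lemma integral_shift (i : A) (hri : ∀ a, i * a = i * H.sR (H.πR a))
    {M : Type u} [AddCommGroup M] (f : A → A → M) (hf : H.BalL f) (a : A) :
    (∑ j ∈ Finset.range (H.nL i), f (H.c1 i j * a) (H.c2 i j)) =
    ∑ j ∈ Finset.range (H.nL i), f (H.c1 i j) (H.c2 i j * H.S a) := by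
  have h1 := hf.1
  have h2 := hf.2.1
  have h3 := hf.2.2
  calc
    (∑ j ∈ Finset.range (H.nL i), f (H.c1 i j * a) (H.c2 i j))
        = ∑ j ∈ Finset.range (H.nL i), ∑ m ∈ Finset.range (H.nL a),
            f (H.c1 i j * (H.tL (H.πL (H.c2 a m)) * H.c1 a m)) (H.c2 i j) := by
      refine Finset.sum_congr rfl fun j _ => ?_
      conv_lhs => rw [← H.counitL_right a]
      rw [Finset.mul_sum, sum_apply₁ f h1]
    _ = ∑ m ∈ Finset.range (H.nL a), ∑ j ∈ Finset.range (H.nL i),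
            f (H.c1 i j * H.c1 a m) (H.c2 i j * H.sL (H.πL (H.c2 a m))) := by
      rw [Finset.sum_comm]
      refine Finset.sum_congr rfl fun m _ => ?_
      have ht := H.comulL_takeuchi (fun U V => f (U * H.c1 a m) V)
        (fun U U' V => by rw [add_mul, h1])
        (fun U V V' => by rw [h2])
        (fun n U V => by rw [mul_assoc, h3])
        (H.πL (H.c2 a m)) i
      try dsimp only at ht
      simp only [mul_assoc] at ht
      exact ht
    _ = ∑ m ∈ Finset.range (H.nL a), ∑ t ∈ Finset.range (H.nR (H.c2 a m)),
          ∑ j ∈ Finset.range (H.nL i),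
            f (H.c1 i j * H.c1 a m)
              (H.c2 i j * (H.d1 (H.c2 a m) t * H.S (H.d2 (H.c2 a m) t))) := by
      refine Finset.sum_congr rfl fun m _ => ?_
      rw [show (∑ j ∈ Finset.range (H.nL i),
            f (H.c1 i j * H.c1 a m) (H.c2 i j * H.sL (H.πL (H.c2 a m)))) =
          ∑ j ∈ Finset.range (H.nL i), ∑ t ∈ Finset.range (H.nR (H.c2 a m)),
            f (H.c1 i j * H.c1 a m)
              (H.c2 i j * (H.d1 (H.c2 a m) t * H.S (H.d2 (H.c2 a m) t))) from
        Finset.sum_congr rfl fun j _ => by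
          rw [← H.antipode_R (H.c2 a m), Finset.mul_sum, sum_apply₂ f h2],
        Finset.sum_comm]
    _ = ∑ t ∈ Finset.range (H.nR a), ∑ m ∈ Finset.range (H.nL (H.d1 a t)),
          ∑ j ∈ Finset.range (H.nL i),
            f (H.c1 i j * H.c1 (H.d1 a t) m)
              (H.c2 i j * (H.c2 (H.d1 a t) m * H.S (H.d2 a t))) := by
      have hm := H.mixed₁
        (fun u x y => ∑ j ∈ Finset.range (H.nL i),
          f (H.c1 i j * u) (H.c2 i j * (x * H.S y)))
        (fun u u' x y => by
          simp only [mul_add, h1, Finset.sum_add_distrib])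
        (fun u x x' y => by
          simp only [add_mul, mul_add, h2, Finset.sum_add_distrib])
        (fun u x y y' => by
          simp only [H.S_add, mul_add, h2, Finset.sum_add_distrib])
        (fun l u x y => by
          have ht := H.comulL_takeuchi (fun U V => f (U * u) (V * (x * H.S y)))
            (fun U U' V => by rw [add_mul, h1])
            (fun U V V' => by rw [add_mul, h2])
            (fun n U V => by rw [mul_assoc, h3, mul_assoc])
            l i
          try dsimp only at ht
          simp only [mul_assoc] at ht ⊢
          exact ht)
        (fun r u x y => by
          simp only [H.S_mul_tR, mul_assoc])
        a
      try dsimp only at hm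
      exact hm.symm
    _ = ∑ t ∈ Finset.range (H.nR a), ∑ j ∈ Finset.range (H.nL i),
            f (H.c1 i j) (H.c2 i j * (H.sR (H.πR (H.d1 a t)) * H.S (H.d2 a t))) := by
      refine Finset.sum_congr rfl fun t _ => ?_
      rw [Finset.sum_comm]
      have hft : H.BalL (fun U V => f U (V * H.S (H.d2 a t))) := by
        refine ⟨fun U U' V => by dsimp only; rw [h1],
          fun U V V' => by dsimp only; rw [add_mul, h2],
          fun n U V => by dsimp only; rw [h3, mul_assoc]⟩
      have e1 := H.EL_mul _ hft i (H.d1 a t)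
      have e2 := H.EL_mul_tL _ hft i
      obtain ⟨l, hl⟩ : ∃ l, H.tL l = H.sR (H.πR (H.d1 a t)) := by
        have hr := H.range_tL_sR
        rw [Set.ext_iff] at hr
        exact (hr _).mpr ⟨_, rfl⟩
      have e3 := e2 l
      rw [hl] at e3
      rw [← hri (H.d1 a t)] at e3
      try dsimp only at e1 e3
      calc
        (∑ j ∈ Finset.range (H.nL i), ∑ m ∈ Finset.range (H.nL (H.d1 a t)),
            f (H.c1 i j * H.c1 (H.d1 a t) m)
              (H.c2 i j * (H.c2 (H.d1 a t) m * H.S (H.d2 a t))))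
            = ∑ j ∈ Finset.range (H.nL i), ∑ m ∈ Finset.range (H.nL (H.d1 a t)),
              f (H.c1 i j * H.c1 (H.d1 a t) m)
                (H.c2 i j * H.c2 (H.d1 a t) m * H.S (H.d2 a t)) := by
          simp only [mul_assoc]
        _ = H.EL (i * H.d1 a t) (fun U V => f U (V * H.S (H.d2 a t))) := e1.symm
        _ = ∑ j ∈ Finset.range (H.nL i),
              f (H.c1 i j)
                (H.c2 i j * H.sR (H.πR (H.d1 a t)) * H.S (H.d2 a t)) := e3
        _ = ∑ j ∈ Finset.range (H.nL i),
              f (H.c1 i j) (H.c2 i j * (H.sR (H.πR (H.d1 a t)) * H.S (H.d2 a t))) := by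
          simp only [mul_assoc]
    _ = ∑ j ∈ Finset.range (H.nL i), f (H.c1 i j) (H.c2 i j * H.S a) := by
      rw [Finset.sum_comm]
      refine Finset.sum_congr rfl fun j _ => ?_
      calc
        (∑ t ∈ Finset.range (H.nR a),
            f (H.c1 i j) (H.c2 i j * (H.sR (H.πR (H.d1 a t)) * H.S (H.d2 a t))))
            = ∑ t ∈ Finset.range (H.nR a),
              f (H.c1 i j) (H.c2 i j * H.S (H.d2 a t * H.tR (H.πR (H.d1 a t)))) := by
          simp only [H.S_mul_tR]
        _ = f (H.c1 i j) (H.c2 i j * H.S a) := by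
          rw [← sum_apply₂ f h2, ← Finset.mul_sum, ← H.S_sum, H.counitR_right]

lemma balL_theta (ρ : A → L) (hρ_add : ∀ x y, ρ (x + y) = ρ x + ρ y)
    (hρ_lin : ∀ l x, ρ (H.sL l * x) = l * ρ x) :
    H.BalL (fun u v => H.tL (ρ v) * u) := by
  refine ⟨fun u u' v => by dsimp only; rw [mul_add],
    fun u v v' => by dsimp only; rw [hρ_add, H.tL_add, add_mul],
    fun l u v => by dsimp only; rw [hρ_lin, H.tL_mul, mul_assoc]⟩

lemma balL_theta' (ρ : A → L) (hρ_add : ∀ x y, ρ (x + y) = ρ x + ρ y)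
    (hρ_lin : ∀ l x, ρ (H.sL l * x) = l * ρ x) (b : A) :
    H.BalL (fun u v => H.tL (ρ (v * b)) * u) := by
  refine ⟨fun u u' v => by dsimp only; rw [mul_add],
    fun u v v' => by dsimp only; rw [add_mul, hρ_add, H.tL_add, add_mul],
    fun l u v => by dsimp only; rw [mul_assoc, hρ_lin, H.tL_mul, mul_assoc]⟩

variable (i : A) (ρ : A → L)

lemma theta_S (hri : ∀ a, i * a = i * H.sR (H.πR a))
    (hρ_add : ∀ x y, ρ (x + y) = ρ x + ρ y)
    (hρ_lin : ∀ l x, ρ (H.sL l * x) = l * ρ x)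
    (hρ : (∑ k ∈ Finset.range (H.nL i), H.tL (ρ (H.c2 i k)) * H.c1 i k) = 1)
    (a : A) :
    (∑ j ∈ Finset.range (H.nL i), H.tL (ρ (H.c2 i j * H.S a)) * H.c1 i j) = a := by
  have hb := H.balL_theta ρ hρ_add hρ_lin
  have hI := H.integral_shift i hri _ hb a
  try dsimp only at hI
  calc
    (∑ j ∈ Finset.range (H.nL i), H.tL (ρ (H.c2 i j * H.S a)) * H.c1 i j)
        = ∑ j ∈ Finset.range (H.nL i), H.tL (ρ (H.c2 i j)) * (H.c1 i j * a) :=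
      hI.symm
    _ = (∑ j ∈ Finset.range (H.nL i), H.tL (ρ (H.c2 i j)) * H.c1 i j) * a := by
      rw [Finset.sum_mul]
      simp only [mul_assoc]
    _ = a := by rw [hρ, one_mul]

lemma theta_SS (hri : ∀ a, i * a = i * H.sR (H.πR a))
    (hρ_add : ∀ x y, ρ (x + y) = ρ x + ρ y)
    (hρ_lin : ∀ l x, ρ (H.sL l * x) = l * ρ x)
    (hρ : (∑ k ∈ Finset.range (H.nL i), H.tL (ρ (H.c2 i k)) * H.c1 i k) = 1)
    (a b : A) :
    (∑ j ∈ Finset.range (H.nL i),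
      H.tL (ρ (H.c2 i j * (H.S a * H.S b))) * H.c1 i j) = b * a := by
  have hb := H.balL_theta' ρ hρ_add hρ_lin (H.S b)
  have hI := H.integral_shift i hri _ hb a
  try dsimp only at hI
  calc
    (∑ j ∈ Finset.range (H.nL i),
        H.tL (ρ (H.c2 i j * (H.S a * H.S b))) * H.c1 i j)
        = ∑ j ∈ Finset.range (H.nL i),
          H.tL (ρ (H.c2 i j * H.S a * H.S b)) * H.c1 i j := by
      simp only [mul_assoc]
    _ = ∑ j ∈ Finset.range (H.nL i),
          H.tL (ρ (H.c2 i j * H.S b)) * (H.c1 i j * a) := hI.symm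
    _ = (∑ j ∈ Finset.range (H.nL i),
          H.tL (ρ (H.c2 i j * H.S b)) * H.c1 i j) * a := by
      rw [Finset.sum_mul]
      simp only [mul_assoc]
    _ = b * a := by rw [H.theta_S i ρ hri hρ_add hρ_lin hρ b]

lemma theta_eq (hri : ∀ a, i * a = i * H.sR (H.πR a))
    (hρ_add : ∀ x y, ρ (x + y) = ρ x + ρ y)
    (hρ_lin : ∀ l x, ρ (H.sL l * x) = l * ρ x)
    (hρ : (∑ k ∈ Finset.range (H.nL i), H.tL (ρ (H.c2 i k)) * H.c1 i k) = 1)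
    (x : A) :
    (∑ j ∈ Finset.range (H.nL i), H.tL (ρ (H.c2 i j * x)) * H.c1 i j) = H.Sinv x := by
  have := H.theta_S i ρ hri hρ_add hρ_lin hρ (H.Sinv x)
  rw [H.S_rightinv] at this
  exact this

lemma theta_conv (hri : ∀ a, i * a = i * H.sR (H.πR a))
    (hρ_add : ∀ x y, ρ (x + y) = ρ x + ρ y)
    (hρ_lin : ∀ l x, ρ (H.sL l * x) = l * ρ x)
    (hρ : (∑ k ∈ Finset.range (H.nL i), H.tL (ρ (H.c2 i k)) * H.c1 i k) = 1)
    (y k : A) :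
    (∑ j ∈ Finset.range (H.nL i),
      H.tL (ρ (H.c2 i j * (y * H.S k))) * H.c1 i j) = k * H.Sinv y := by
  have := H.theta_SS i ρ hri hρ_add hρ_lin hρ (H.Sinv y) k
  rw [H.S_rightinv] at this
  exact this

lemma sinv_pair (hri : ∀ a, i * a = i * H.sR (H.πR a))
    (hρ_add : ∀ x y, ρ (x + y) = ρ x + ρ y)
    (hρ_lin : ∀ l x, ρ (H.sL l * x) = l * ρ x)
    (hρ : (∑ k ∈ Finset.range (H.nL i), H.tL (ρ (H.c2 i k)) * H.c1 i k) = 1)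
    (b : A) :
    (∑ p ∈ Finset.range (H.nL b), H.Sinv (H.c2 b p) * H.c1 b p) = H.tR (H.πR b) := by
  have hb := H.balL_theta ρ hρ_add hρ_lin
  obtain ⟨l, hl⟩ : ∃ l, H.tL l = H.sR (H.πR b) := by
    have hr := H.range_tL_sR
    rw [Set.ext_iff] at hr
    exact (hr _).mpr ⟨_, rfl⟩
  have e2 := H.EL_mul_tL _ hb i l
  try dsimp only at e2
  calc
    (∑ p ∈ Finset.range (H.nL b), H.Sinv (H.c2 b p) * H.c1 b p)
        = ∑ p ∈ Finset.range (H.nL b), (∑ j ∈ Finset.range (H.nL i),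
            H.tL (ρ (H.c2 i j * H.c2 b p)) * H.c1 i j) * H.c1 b p := by
      refine Finset.sum_congr rfl fun p _ => ?_
      rw [H.theta_eq i ρ hri hρ_add hρ_lin hρ (H.c2 b p)]
    _ = ∑ j ∈ Finset.range (H.nL i), ∑ p ∈ Finset.range (H.nL b),
          H.tL (ρ (H.c2 i j * H.c2 b p)) * (H.c1 i j * H.c1 b p) := by
      rw [Finset.sum_congr rfl fun p (_ : p ∈ Finset.range (H.nL b)) =>
        Finset.sum_mul _ _ _, Finset.sum_comm]
      simp only [mul_assoc]
    _ = H.EL (i * b) (fun u v => H.tL (ρ v) * u) := by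
      rw [H.EL_mul _ hb i b]
    _ = H.EL (i * H.tL l) (fun u v => H.tL (ρ v) * u) := by
      rw [hri b, ← hl]
    _ = ∑ j ∈ Finset.range (H.nL i),
          H.tL (ρ (H.c2 i j * H.sR (H.πR b))) * H.c1 i j := by
      rw [e2]
      simp only [hl]
    _ = H.Sinv (H.sR (H.πR b)) := H.theta_eq i ρ hri hρ_add hρ_lin hρ _
    _ = H.tR (H.πR b) := H.Sinv_sR _

end Integral

end HopfAlgebroidData

/-- Let `H` be a Hopf algebroid with a non-degenerate right integral `i`
invariant under the antipode, `Q = (H_H, ∗, η)` the associated Frobenius algebra in `M_H`,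
and `X = {}_U H_Q` the associated internal `U`-`Q` bimodule in `BIM(M_H)`.  Then `X`
satisfies the left D2 condition with D2 quasi-basis `Λ(S(i₍₁₎)) ⊗ Λ(i₍₂₎)` (`Λ` = left
multiplication): the quasi-basis composite
`(Λ(S(i₍₁₎)) ⊗ id) ∘ γ_R ∘ ∗ ∘ (Λ(i₍₂₎) ⊗ id)` is the identity on `H ⊗ H`
(equality in the tensor product `H ⊗_R H` of `M_H`, expressed by evaluation against all
`R`-balanced biadditive maps). -/
theorem internal_bimodule_depth_two
    {A L R : Type u} [Ring A] [Ring L] [Ring R]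
    (H : HopfAlgebroidData A L R) (i : A)
    (hri : ∀ a, i * a = i * H.sR (H.πR a))
    (hS : H.S i = i)
    (hnd₁ : Function.Bijective (H.intMapL i))
    (hnd₂ : Function.Bijective (H.intMapR i))
    (ρ : A → L) (hρ_add : ∀ x y, ρ (x + y) = ρ x + ρ y)
    (hρ_lin : ∀ l x, ρ (H.sL l * x) = l * ρ x)
    (hρ : (∑ k ∈ Finset.range (H.nL i), H.tL (ρ (H.c2 i k)) * H.c1 i k) = 1) :
    ∀ (M : Type u) (_ : AddCommGroup M) (f : A → A → M),
      (∀ u u' v, f (u + u') v = f u v + f u' v) →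
      (∀ u v v', f u (v + v') = f u v + f u v') →
      (∀ r u v, f (u * H.sR r) v = f u (v * H.tR r)) →
      ∀ h k,
        (∑ j ∈ Finset.range (H.nL i),
          ∑ t ∈ Finset.range (H.nR (H.hconv ρ (H.c2 i j * h) k)),
            f (H.S (H.c1 i j) * H.d1 (H.hconv ρ (H.c2 i j * h) k) t)
              (H.d2 (H.hconv ρ (H.c2 i j * h) k) t)) = f h k := by
  intro M _ f hf1 hf2 hf3 h k
  classical
  -- generic balanced families built from `f`
  have hg1 : ∀ c : A, H.BalR (fun x y => f (c * x) y) := fun c =>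
    ⟨fun x x' y => by dsimp only; rw [mul_add, hf1],
     fun x y y' => by dsimp only; rw [hf2],
     fun r x y => by
       dsimp only
       rw [show c * (x * H.sR r) = c * x * H.sR r from (mul_assoc _ _ _).symm, hf3]⟩
  have hbase : ∀ c w : A, H.BalR (fun x y => f (c * x) (w * y)) := fun c w =>
    ⟨fun x x' y => by dsimp only; rw [mul_add, hf1],
     fun x y y' => by dsimp only; rw [mul_add, hf2],
     fun r x y => by
       dsimp only
       rw [show c * (x * H.sR r) = c * x * H.sR r from (mul_assoc _ _ _).symm, hf3,
         mul_assoc]⟩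
  have hnest : ∀ c w b : A, H.BalR (fun x y => ∑ t ∈ Finset.range (H.nR b),
      f (c * (x * H.d1 b t)) (w * (y * H.d2 b t))) := by
    intro c w b
    refine ⟨fun x x' y => by
        dsimp only; simp only [add_mul, mul_add, hf1, Finset.sum_add_distrib],
      fun x y y' => by
        dsimp only; simp only [add_mul, mul_add, hf2, Finset.sum_add_distrib],
      fun r x y => ?_⟩
    dsimp only
    have e := H.comulR_takeuchi (fun X Y => f (c * (x * X)) (w * (y * Y)))
      (fun X X' Y => by simp only [mul_add, hf1])
      (fun X Y Y' => by simp only [mul_add, hf2])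
      (fun r' X Y => by
        rw [show c * (x * (X * H.sR r')) = c * (x * X) * H.sR r' by
          simp only [mul_assoc], hf3]
        simp only [mul_assoc])
      r b
    try dsimp only at e
    simp only [mul_assoc] at e ⊢
    exact e
  -- balancedness of the convolution-type map
  have hPhi : ∀ j : ℕ, H.BalL (fun u v => ∑ t ∈ Finset.range (H.nR u),
      f (H.S (H.c1 i j) * H.d1 u t) (H.tL (ρ (v * H.S k)) * H.d2 u t)) := by
    intro j
    refine ⟨fun u u' v => ?_, fun u v v' => by
        dsimp only
        simp only [add_mul, hρ_add, H.tL_add, hf2, Finset.sum_add_distrib],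
      fun l u v => ?_⟩
    · dsimp only
      exact H.ER_add _ (hbase (H.S (H.c1 i j)) (H.tL (ρ (v * H.S k)))) u u'
    · dsimp only
      have e := H.ER_tL_mul _ (hbase (H.S (H.c1 i j)) (H.tL (ρ (v * H.S k)))) l u
      simp only [HopfAlgebroidData.ER] at e
      try dsimp only at e
      rw [e]
      refine Finset.sum_congr rfl fun t _ => ?_
      rw [mul_assoc (H.sL l) v (H.S k), hρ_lin, H.tL_mul, mul_assoc]
  calc
    (∑ j ∈ Finset.range (H.nL i),
        ∑ t ∈ Finset.range (H.nR (H.hconv ρ (H.c2 i j * h) k)),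
          f (H.S (H.c1 i j) * H.d1 (H.hconv ρ (H.c2 i j * h) k) t)
            (H.d2 (H.hconv ρ (H.c2 i j * h) k) t))
        = ∑ j ∈ Finset.range (H.nL i), ∑ m ∈ Finset.range (H.nL (H.c2 i j * h)),
            H.ER (H.tL (ρ (H.c2 (H.c2 i j * h) m * H.S k)) * H.c1 (H.c2 i j * h) m)
              (fun u v => f (H.S (H.c1 i j) * u) v) := by
      refine Finset.sum_congr rfl fun j _ => ?_
      rw [show (∑ t ∈ Finset.range (H.nR (H.hconv ρ (H.c2 i j * h) k)),
            f (H.S (H.c1 i j) * H.d1 (H.hconv ρ (H.c2 i j * h) k) t)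
              (H.d2 (H.hconv ρ (H.c2 i j * h) k) t)) =
          H.ER (H.hconv ρ (H.c2 i j * h) k) (fun u v => f (H.S (H.c1 i j) * u) v)
          from rfl]
      rw [show H.hconv ρ (H.c2 i j * h) k =
          ∑ m ∈ Finset.range (H.nL (H.c2 i j * h)),
            H.tL (ρ (H.c2 (H.c2 i j * h) m * H.S k)) * H.c1 (H.c2 i j * h) m
          from rfl]
      rw [H.ER_sum _ (hg1 (H.S (H.c1 i j)))]
    -- E1
    _ = ∑ j ∈ Finset.range (H.nL i), ∑ m ∈ Finset.range (H.nL (H.c2 i j * h)),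
          ∑ t ∈ Finset.range (H.nR (H.c1 (H.c2 i j * h) m)),
            f (H.S (H.c1 i j) * H.d1 (H.c1 (H.c2 i j * h) m) t)
              (H.tL (ρ (H.c2 (H.c2 i j * h) m * H.S k)) *
                H.d2 (H.c1 (H.c2 i j * h) m) t) := by
      refine Finset.sum_congr rfl fun j _ => Finset.sum_congr rfl fun m _ => ?_
      exact H.ER_tL_mul _ (hg1 (H.S (H.c1 i j))) _ _
    -- E2 : comultiply the product `c2 i j * h`
    _ = ∑ j ∈ Finset.range (H.nL i), ∑ p ∈ Finset.range (H.nL (H.c2 i j)),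
          ∑ q ∈ Finset.range (H.nL h),
          ∑ t ∈ Finset.range (H.nR (H.c1 (H.c2 i j) p * H.c1 h q)),
            f (H.S (H.c1 i j) * H.d1 (H.c1 (H.c2 i j) p * H.c1 h q) t)
              (H.tL (ρ ((H.c2 (H.c2 i j) p * H.c2 h q) * H.S k)) *
                H.d2 (H.c1 (H.c2 i j) p * H.c1 h q) t) := by
      refine Finset.sum_congr rfl fun j _ => ?_
      exact H.EL_mul _ (hPhi j) (H.c2 i j) h
    -- E3 : comultiply the product with γ_R
    _ = ∑ j ∈ Finset.range (H.nL i), ∑ p ∈ Finset.range (H.nL (H.c2 i j)),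
          ∑ q ∈ Finset.range (H.nL h),
          ∑ s ∈ Finset.range (H.nR (H.c1 (H.c2 i j) p)),
          ∑ t ∈ Finset.range (H.nR (H.c1 h q)),
            f (H.S (H.c1 i j) * (H.d1 (H.c1 (H.c2 i j) p) s * H.d1 (H.c1 h q) t))
              (H.tL (ρ (H.c2 (H.c2 i j) p * (H.c2 h q * H.S k))) *
                (H.d2 (H.c1 (H.c2 i j) p) s * H.d2 (H.c1 h q) t)) := by
      refine Finset.sum_congr rfl fun j _ => Finset.sum_congr rfl fun p _ =>
        Finset.sum_congr rfl fun q _ => ?_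
      have e := H.ER_mul _
        (hbase (H.S (H.c1 i j)) (H.tL (ρ ((H.c2 (H.c2 i j) p * H.c2 h q) * H.S k))))
        (H.c1 (H.c2 i j) p) (H.c1 h q)
      simp only [HopfAlgebroidData.ER] at e
      try dsimp only at e
      rw [e]
      simp only [mul_assoc]
    -- E4 : coassociativity of γ_L on i
    _ = ∑ j ∈ Finset.range (H.nL i), ∑ p ∈ Finset.range (H.nL (H.c1 i j)),
          ∑ q ∈ Finset.range (H.nL h),
          ∑ s ∈ Finset.range (H.nR (H.c2 (H.c1 i j) p)),
          ∑ t ∈ Finset.range (H.nR (H.c1 h q)),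
            f (H.S (H.c1 (H.c1 i j) p) *
                (H.d1 (H.c2 (H.c1 i j) p) s * H.d1 (H.c1 h q) t))
              (H.tL (ρ (H.c2 i j * (H.c2 h q * H.S k))) *
                (H.d2 (H.c2 (H.c1 i j) p) s * H.d2 (H.c1 h q) t)) := by
      have e := H.comulL_coassoc
        (fun α β ξ => ∑ q ∈ Finset.range (H.nL h), ∑ s ∈ Finset.range (H.nR β),
          ∑ t ∈ Finset.range (H.nR (H.c1 h q)),
            f (H.S α * (H.d1 β s * H.d1 (H.c1 h q) t))
              (H.tL (ρ (ξ * (H.c2 h q * H.S k))) *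
                (H.d2 β s * H.d2 (H.c1 h q) t)))
        (fun α α' β ξ => by
          simp only [H.S_add, add_mul, hf1, Finset.sum_add_distrib])
        (fun α β β' ξ => by
          rw [Finset.sum_congr rfl fun q (_ : q ∈ Finset.range (H.nL h)) => by
            have e3 := H.ER_add _
              (hnest (H.S α) (H.tL (ρ (ξ * (H.c2 h q * H.S k)))) (H.c1 h q)) β β'
            simp only [HopfAlgebroidData.ER] at e3
            try dsimp only at e3
            exact e3,
            Finset.sum_add_distrib])
        (fun α β ξ ξ' => by
          simp only [add_mul, hρ_add, H.tL_add, hf2, Finset.sum_add_distrib])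
        (fun l α β ξ => by
          have e2 : ∀ q : ℕ,
              (∑ s ∈ Finset.range (H.nR (H.sL l * β)),
                ∑ t ∈ Finset.range (H.nR (H.c1 h q)),
                  f (H.S α * (H.d1 (H.sL l * β) s * H.d1 (H.c1 h q) t))
                    (H.tL (ρ (ξ * (H.c2 h q * H.S k))) *
                      (H.d2 (H.sL l * β) s * H.d2 (H.c1 h q) t))) =
              ∑ s ∈ Finset.range (H.nR β),
                ∑ t ∈ Finset.range (H.nR (H.c1 h q)),
                  f (H.S α * (H.sL l * H.d1 β s * H.d1 (H.c1 h q) t))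
                    (H.tL (ρ (ξ * (H.c2 h q * H.S k))) *
                      (H.d2 β s * H.d2 (H.c1 h q) t)) := fun q => by
            have e3 := H.ER_sL_mul _
              (hnest (H.S α) (H.tL (ρ (ξ * (H.c2 h q * H.S k)))) (H.c1 h q)) l β
            simp only [HopfAlgebroidData.ER] at e3
            try dsimp only at e3
            exact e3
          refine Eq.trans ?_ (Finset.sum_congr rfl fun q _ => (e2 q).symm)
          simp only [H.S_tL_mul, mul_assoc])
        (fun l α β ξ => by
          have e2 : ∀ q : ℕ,
              (∑ s ∈ Finset.range (H.nR (H.tL l * β)),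
                ∑ t ∈ Finset.range (H.nR (H.c1 h q)),
                  f (H.S α * (H.d1 (H.tL l * β) s * H.d1 (H.c1 h q) t))
                    (H.tL (ρ (ξ * (H.c2 h q * H.S k))) *
                      (H.d2 (H.tL l * β) s * H.d2 (H.c1 h q) t))) =
              ∑ s ∈ Finset.range (H.nR β),
                ∑ t ∈ Finset.range (H.nR (H.c1 h q)),
                  f (H.S α * (H.d1 β s * H.d1 (H.c1 h q) t))
                    (H.tL (ρ (ξ * (H.c2 h q * H.S k))) *
                      (H.tL l * H.d2 β s * H.d2 (H.c1 h q) t)) := fun q => by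
            have e3 := H.ER_tL_mul _
              (hnest (H.S α) (H.tL (ρ (ξ * (H.c2 h q * H.S k)))) (H.c1 h q)) l β
            simp only [HopfAlgebroidData.ER] at e3
            try dsimp only at e3
            exact e3
          refine Eq.trans (Finset.sum_congr rfl fun q _ => e2 q) ?_
          refine Finset.sum_congr rfl fun q _ => Finset.sum_congr rfl fun s _ =>
            Finset.sum_congr rfl fun t _ => ?_
          rw [mul_assoc (H.sL l) ξ (H.c2 h q * H.S k), hρ_lin, H.tL_mul]
          simp only [mul_assoc])
        i
      try dsimp only at e
      exact e.symm
    -- E5 : mixed coassociativity on `c1 i j`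
    _ = ∑ j ∈ Finset.range (H.nL i), ∑ s ∈ Finset.range (H.nR (H.c1 i j)),
          ∑ p ∈ Finset.range (H.nL (H.d1 (H.c1 i j) s)),
          ∑ q ∈ Finset.range (H.nL h),
          ∑ t ∈ Finset.range (H.nR (H.c1 h q)),
            f (H.S (H.c1 (H.d1 (H.c1 i j) s) p) *
                (H.c2 (H.d1 (H.c1 i j) s) p * H.d1 (H.c1 h q) t))
              (H.tL (ρ (H.c2 i j * (H.c2 h q * H.S k))) *
                (H.d2 (H.c1 i j) s * H.d2 (H.c1 h q) t)) := by
      refine Finset.sum_congr rfl fun j _ => ?_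
      rw [Finset.sum_congr rfl fun p (_ : p ∈ Finset.range (H.nL (H.c1 i j))) =>
        Finset.sum_comm]
      have e := H.mixed₁
        (fun α x y => ∑ q ∈ Finset.range (H.nL h),
          ∑ t ∈ Finset.range (H.nR (H.c1 h q)),
            f (H.S α * (x * H.d1 (H.c1 h q) t))
              (H.tL (ρ (H.c2 i j * (H.c2 h q * H.S k))) * (y * H.d2 (H.c1 h q) t)))
        (fun α α' x y => by
          simp only [H.S_add, add_mul, hf1, Finset.sum_add_distrib])
        (fun α x x' y => by
          simp only [add_mul, mul_add, hf1, Finset.sum_add_distrib])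
        (fun α x y y' => by
          simp only [add_mul, mul_add, hf2, Finset.sum_add_distrib])
        (fun l α x y => by
          simp only [H.S_tL_mul, mul_assoc])
        (fun r α x y => by
          refine Finset.sum_congr rfl fun q _ => ?_
          exact (hnest (H.S α)
            (H.tL (ρ (H.c2 i j * (H.c2 h q * H.S k)))) (H.c1 h q)).2.2 r x y)
        (H.c1 i j)
      try dsimp only at e
      exact e.symm
    -- E6 : antipode collapse on the leftmost legs
    _ = ∑ j ∈ Finset.range (H.nL i), ∑ s ∈ Finset.range (H.nR (H.c1 i j)),
          ∑ q ∈ Finset.range (H.nL h),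
          ∑ t ∈ Finset.range (H.nR (H.c1 h q)),
            f (H.sR (H.πR (H.d1 (H.c1 i j) s)) * H.d1 (H.c1 h q) t)
              (H.tL (ρ (H.c2 i j * (H.c2 h q * H.S k))) *
                (H.d2 (H.c1 i j) s * H.d2 (H.c1 h q) t)) := by
      refine Finset.sum_congr rfl fun j _ => Finset.sum_congr rfl fun s _ => ?_
      rw [Finset.sum_comm]
      refine Finset.sum_congr rfl fun q _ => ?_
      rw [Finset.sum_comm]
      refine Finset.sum_congr rfl fun t _ => ?_
      calc
        (∑ p ∈ Finset.range (H.nL (H.d1 (H.c1 i j) s)),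
            f (H.S (H.c1 (H.d1 (H.c1 i j) s) p) *
                (H.c2 (H.d1 (H.c1 i j) s) p * H.d1 (H.c1 h q) t))
              (H.tL (ρ (H.c2 i j * (H.c2 h q * H.S k))) *
                (H.d2 (H.c1 i j) s * H.d2 (H.c1 h q) t)))
            = ∑ p ∈ Finset.range (H.nL (H.d1 (H.c1 i j) s)),
              f ((H.S (H.c1 (H.d1 (H.c1 i j) s) p) *
                  H.c2 (H.d1 (H.c1 i j) s) p) * H.d1 (H.c1 h q) t)
                (H.tL (ρ (H.c2 i j * (H.c2 h q * H.S k))) *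
                  (H.d2 (H.c1 i j) s * H.d2 (H.c1 h q) t)) := by
          simp only [mul_assoc]
        _ = f ((∑ p ∈ Finset.range (H.nL (H.d1 (H.c1 i j) s)),
                H.S (H.c1 (H.d1 (H.c1 i j) s) p) * H.c2 (H.d1 (H.c1 i j) s) p) *
                  H.d1 (H.c1 h q) t)
              (H.tL (ρ (H.c2 i j * (H.c2 h q * H.S k))) *
                (H.d2 (H.c1 i j) s * H.d2 (H.c1 h q) t)) :=
          (HopfAlgebroidData.sum_apply₁ (fun z w => f (z * H.d1 (H.c1 h q) t) w)
            (fun u u' v => by rw [add_mul, hf1]) _ _ _).symm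
        _ = f (H.sR (H.πR (H.d1 (H.c1 i j) s)) * H.d1 (H.c1 h q) t)
              (H.tL (ρ (H.c2 i j * (H.c2 h q * H.S k))) *
                (H.d2 (H.c1 i j) s * H.d2 (H.c1 h q) t)) := by
          rw [H.antipode_L]
    -- E7 : Takeuchi move of `s_R (π_R …)` across the tensor
    _ = ∑ j ∈ Finset.range (H.nL i), ∑ s ∈ Finset.range (H.nR (H.c1 i j)),
          ∑ q ∈ Finset.range (H.nL h),
          ∑ t ∈ Finset.range (H.nR (H.c1 h q)),
            f (H.d1 (H.c1 h q) t)
              (H.tL (ρ (H.c2 i j * (H.c2 h q * H.S k))) *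
                (H.d2 (H.c1 i j) s *
                  (H.tR (H.πR (H.d1 (H.c1 i j) s)) * H.d2 (H.c1 h q) t))) := by
      refine Finset.sum_congr rfl fun j _ => Finset.sum_congr rfl fun s _ =>
        Finset.sum_congr rfl fun q _ => ?_
      have e := H.comulR_takeuchi
        (fun X Y => f X (H.tL (ρ (H.c2 i j * (H.c2 h q * H.S k))) *
          (H.d2 (H.c1 i j) s * Y)))
        (fun X X' Y => by rw [hf1])
        (fun X Y Y' => by simp only [mul_add, hf2])
        (fun r X Y => by
          rw [hf3]
          simp only [mul_assoc])
        (H.πR (H.d1 (H.c1 i j) s)) (H.c1 h q)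
      try dsimp only at e
      exact e
    -- E8 : counit collapse recreating `c1 i j`
    _ = ∑ j ∈ Finset.range (H.nL i), ∑ q ∈ Finset.range (H.nL h),
          ∑ t ∈ Finset.range (H.nR (H.c1 h q)),
            f (H.d1 (H.c1 h q) t)
              (H.tL (ρ (H.c2 i j * (H.c2 h q * H.S k))) *
                (H.c1 i j * H.d2 (H.c1 h q) t)) := by
      refine Finset.sum_congr rfl fun j _ => ?_
      rw [Finset.sum_comm]
      refine Finset.sum_congr rfl fun q _ => ?_
      rw [Finset.sum_comm]
      refine Finset.sum_congr rfl fun t _ => ?_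
      calc
        (∑ s ∈ Finset.range (H.nR (H.c1 i j)),
            f (H.d1 (H.c1 h q) t)
              (H.tL (ρ (H.c2 i j * (H.c2 h q * H.S k))) *
                (H.d2 (H.c1 i j) s *
                  (H.tR (H.πR (H.d1 (H.c1 i j) s)) * H.d2 (H.c1 h q) t))))
            = ∑ s ∈ Finset.range (H.nR (H.c1 i j)),
              f (H.d1 (H.c1 h q) t)
                (H.tL (ρ (H.c2 i j * (H.c2 h q * H.S k))) *
                  ((H.d2 (H.c1 i j) s * H.tR (H.πR (H.d1 (H.c1 i j) s))) *
                    H.d2 (H.c1 h q) t)) := by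
          simp only [mul_assoc]
        _ = f (H.d1 (H.c1 h q) t)
              (H.tL (ρ (H.c2 i j * (H.c2 h q * H.S k))) *
                ((∑ s ∈ Finset.range (H.nR (H.c1 i j)),
                    H.d2 (H.c1 i j) s * H.tR (H.πR (H.d1 (H.c1 i j) s))) *
                  H.d2 (H.c1 h q) t)) := by
          rw [← HopfAlgebroidData.sum_apply₂ f hf2, ← Finset.mul_sum, ← Finset.sum_mul]
        _ = f (H.d1 (H.c1 h q) t)
              (H.tL (ρ (H.c2 i j * (H.c2 h q * H.S k))) *
                (H.c1 i j * H.d2 (H.c1 h q) t)) := by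
          rw [H.counitR_right]
    -- E9 : the inverse-antipode formula collapses the integral legs
    _ = ∑ q ∈ Finset.range (H.nL h), ∑ t ∈ Finset.range (H.nR (H.c1 h q)),
          f (H.d1 (H.c1 h q) t) (k * (H.Sinv (H.c2 h q) * H.d2 (H.c1 h q) t)) := by
      rw [Finset.sum_comm]
      refine Finset.sum_congr rfl fun q _ => ?_
      rw [Finset.sum_comm]
      refine Finset.sum_congr rfl fun t _ => ?_
      calc
        (∑ j ∈ Finset.range (H.nL i),
            f (H.d1 (H.c1 h q) t)
              (H.tL (ρ (H.c2 i j * (H.c2 h q * H.S k))) *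
                (H.c1 i j * H.d2 (H.c1 h q) t)))
            = ∑ j ∈ Finset.range (H.nL i),
              f (H.d1 (H.c1 h q) t)
                ((H.tL (ρ (H.c2 i j * (H.c2 h q * H.S k))) * H.c1 i j) *
                  H.d2 (H.c1 h q) t) := by
          simp only [mul_assoc]
        _ = f (H.d1 (H.c1 h q) t)
              ((∑ j ∈ Finset.range (H.nL i),
                  H.tL (ρ (H.c2 i j * (H.c2 h q * H.S k))) * H.c1 i j) *
                H.d2 (H.c1 h q) t) := by
          rw [← HopfAlgebroidData.sum_apply₂ f hf2, ← Finset.sum_mul]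
        _ = f (H.d1 (H.c1 h q) t)
              ((k * H.Sinv (H.c2 h q)) * H.d2 (H.c1 h q) t) := by
          rw [H.theta_conv i ρ hri hρ_add hρ_lin hρ (H.c2 h q) k]
        _ = f (H.d1 (H.c1 h q) t)
              (k * (H.Sinv (H.c2 h q) * H.d2 (H.c1 h q) t)) := by
          rw [mul_assoc]
    -- E10 : mixed coassociativity on h
    _ = ∑ s ∈ Finset.range (H.nR h), ∑ p ∈ Finset.range (H.nL (H.d2 h s)),
          f (H.d1 h s) (k * (H.Sinv (H.c2 (H.d2 h s) p) * H.c1 (H.d2 h s) p)) := by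
      have e := H.mixed₂ (fun u v w => f u (k * (H.Sinv w * v)))
        (fun u u' v w => by rw [hf1])
        (fun u v v' w => by simp only [mul_add, hf2])
        (fun u v w w' => by simp only [H.Sinv_add, add_mul, mul_add, hf2])
        (fun r u v w => by
          rw [hf3]
          simp only [mul_assoc])
        (fun l u v w => by
          rw [H.Sinv_sL_mul]
          simp only [mul_assoc])
        h
      try dsimp only at e
      exact e
    -- E11 : the inverse-antipode pairing gives the counit
    _ = ∑ s ∈ Finset.range (H.nR h), f (H.d1 h s) (k * H.tR (H.πR (H.d2 h s))) := by
      refine Finset.sum_congr rfl fun s _ => ?_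
      rw [← HopfAlgebroidData.sum_apply₂ f hf2, ← Finset.mul_sum,
        H.sinv_pair i ρ hri hρ_add hρ_lin hρ (H.d2 h s)]
    -- final counit collapse
    _ = f h k := by
      calc
        (∑ s ∈ Finset.range (H.nR h), f (H.d1 h s) (k * H.tR (H.πR (H.d2 h s))))
            = ∑ s ∈ Finset.range (H.nR h),
              f (H.d1 h s * H.sR (H.πR (H.d2 h s))) k := by
          refine Finset.sum_congr rfl fun s _ => ?_
          rw [hf3]
        _ = f (∑ s ∈ Finset.range (H.nR h),
              H.d1 h s * H.sR (H.πR (H.d2 h s))) k :=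
          (HopfAlgebroidData.sum_apply₁ f hf1 _ _ _).symm
        _ = f h k := by rw [H.counitR_left]
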